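/- Let F : (0,∞) → (0,∞) be continuous, strictly increasing with lim_{t→∞} F(t) = ∞, let U : ℝ² → (0,∞) be measurable with lim_{|x|→∞} F(1/U(x))/|x| = 1, and let ℓ > 0. Then for every ε ∈ (0,1) there exists R > 0 such that for all x ∈ ℝ² with |x| > R, (|φ₀|² * U)(x) ≥ (1−ε)/F^{-1}((1+ε)²|x|), where F^{-1} denotes the inverse function of F. -/

import Mathlib

open MeasureTheory Filter Real

noncomputable section

abbrev E2 := EuclideanSpace ℝ (Fin 2)

/-- The centred Gaussian probability density `|φ₀(x)|² = (2πℓ²)⁻¹ exp(-|x|²/(2ℓ²))` on `ℝ²`. -/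
def phiSq (l : ℝ) (x : E2) : ℝ := (2 * π * l ^ 2)⁻¹ * Real.exp (-‖x‖ ^ 2 / (2 * l ^ 2))

/-!
Most of the Gaussian mass sits in a fixed ball `‖y‖ ≤ r`, of mass `> 1 - ε`. For `y` in that ball
and `‖x‖` large, `‖x - y‖ ≤ ‖x‖ + r ≤ (1 + ε)‖x‖`, so the decay hypothesis gives
`F (1 / U (x - y)) < (1 + ε)‖x - y‖ ≤ (1 + ε)²‖x‖ = F t`, where the intermediate value theorem
supplies `t = F⁻¹((1 + ε)²‖x‖)`.
Monotonicity of `F` turns this into `U (x - y) > 1 / t`, and integrating over the ball gives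
the bound `(1 - ε) / t`.
-/

lemma phiSq_nonneg (l : ℝ) (x : E2) : 0 ≤ phiSq l x := by
  unfold phiSq
  positivity

lemma integral_phiSq {l : ℝ} (hl : l ≠ 0) : ∫ y, phiSq l y = 1 := by
  have hb : 0 < (2 * l ^ 2)⁻¹ := by positivity
  have hexp (y : E2) : -‖y‖ ^ 2 / (2 * l ^ 2) = -(2 * l ^ 2)⁻¹ * ‖y‖ ^ 2 := by ring
  simp only [phiSq, hexp, integral_const_mul, GaussianFourier.integral_rexp_neg_mul_sq_norm hb,
    finrank_euclideanSpace_fin]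
  norm_num
  field_simp

lemma integrable_phiSq {l : ℝ} (hl : l ≠ 0) : Integrable (phiSq l) :=
  Integrable.of_integral_ne_zero (by simp [integral_phiSq hl])

lemma exists_lt_setIntegral_closedBall {α : Type*} [PseudoMetricSpace α] [MeasurableSpace α]
    [OpensMeasurableSpace α] {μ : Measure α} {f : α → ℝ} (hf : Integrable f μ) (x₀ : α) {a : ℝ}
    (ha : a < ∫ y, f y ∂μ) : ∃ r, a < ∫ y in Metric.closedBall x₀ r, f y ∂μ :=
  (((aecover_closedBall tendsto_id).integral_tendsto_of_countably_generated hf).eventually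
    (eventually_gt_nhds ha)).exists

lemma exists_forall_norm_ge_lt_mul_norm {E : Type*} [SeminormedAddCommGroup E] {g : E → ℝ}
    (hg : Tendsto (fun x => g x / ‖x‖) (comap (fun x => ‖x‖) atTop) (nhds 1)) {c : ℝ}
    (hc : 1 < c) : ∃ M, ∀ z, M ≤ ‖z‖ → g z < c * ‖z‖ := by
  obtain ⟨M, hM⟩ := eventually_atTop.1 (eventually_comap.1 (hg.eventually (eventually_lt_nhds hc)))
  refine ⟨max M 1, fun z hz => ?_⟩
  have hz0 : 0 < ‖z‖ := zero_lt_one.trans_le ((le_max_right M 1).trans hz)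
  exact (div_lt_iff₀ hz0).1 (hM _ ((le_max_left M 1).trans hz) z rfl)

lemma ofReal_mul_le_lintegral_mul {α : Type*} [MeasurableSpace α] {μ : Measure α}
    {φ g : α → ℝ} {s : Set α} (hs : MeasurableSet s) (hφ : ∀ y ∈ s, 0 ≤ φ y)
    (hφs : IntegrableOn φ s μ) {m c : ℝ} (hc : 0 ≤ c) (hm : m ≤ ∫ y in s, φ y ∂μ)
    (hg : ∀ y ∈ s, c ≤ g y) : ENNReal.ofReal (m * c) ≤ ∫⁻ y, ENNReal.ofReal (φ y * g y) ∂μ :=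
  calc ENNReal.ofReal (m * c)
      ≤ ENNReal.ofReal (∫ y in s, φ y * c ∂μ) := by
        rw [integral_mul_const]
        gcongr
    _ = ∫⁻ y in s, ENNReal.ofReal (φ y * c) ∂μ :=
        ofReal_integral_eq_lintegral_ofReal (hφs.mul_const c)
          (ae_restrict_of_forall_mem hs fun y hy => mul_nonneg (hφ y hy) hc)
    _ ≤ ∫⁻ y in s, ENNReal.ofReal (φ y * g y) ∂μ :=
        setLIntegral_mono' hs fun y hy =>
          ENNReal.ofReal_le_ofReal (mul_le_mul_of_nonneg_left (hg y hy) (hφ y hy))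
    _ ≤ ∫⁻ y, ENNReal.ofReal (φ y * g y) ∂μ := setLIntegral_le_lintegral _ _

theorem stmt_7_general
    (F : ℝ → ℝ)
    (hFcont : ContinuousOn F (Set.Ioi 0))
    (hFmono : StrictMonoOn F (Set.Ioi 0))
    (hFtop : Tendsto F atTop atTop)
    (U : E2 → ℝ)
    (hUpos : ∀ x, 0 < U x)
    (hUdecay : Tendsto (fun x : E2 => F (1 / U x) / ‖x‖)
      (comap (fun x : E2 => ‖x‖) atTop) (nhds 1))
    (l : ℝ) (hl : 0 < l)
    (Finv : ℝ → ℝ)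
    (hFinv : ∀ t > 0, Finv (F t) = t)
    (ε : ℝ) (hε : ε ∈ Set.Ioo (0 : ℝ) 1) :
    ∃ R > 0, ∀ x : E2, R < ‖x‖ →
      ENNReal.ofReal ((1 - ε) / Finv ((1 + ε) ^ 2 * ‖x‖)) ≤
        ∫⁻ y : E2, ENNReal.ofReal (phiSq l y * U (x - y)) := by
  obtain ⟨hε0, hε1⟩ := hε
  obtain ⟨r, hr⟩ := exists_lt_setIntegral_closedBall (integrable_phiSq hl.ne') 0
    (a := 1 - ε) (by rw [integral_phiSq hl.ne']; linarith)
  obtain ⟨M, hM⟩ := exists_forall_norm_ge_lt_mul_norm hUdecay (c := 1 + ε) (by linarith)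
  refine ⟨max (max (M + r) (r / ε)) (max (F 1) 1), by positivity, fun x hx => ?_⟩
  obtain ⟨⟨hxM, hxr⟩, hxF, -⟩ := max_lt_iff.1 hx |>.imp max_lt_iff.1 max_lt_iff.1
  have hrx : r ≤ ε * ‖x‖ := by rw [div_lt_iff₀ hε0] at hxr; linarith
  obtain ⟨t, ht1, hts⟩ : (1 + ε) ^ 2 * ‖x‖ ∈ F '' Set.Ici 1 :=
    intermediate_value_Ici (hFcont.mono fun u hu => zero_lt_one.trans_le hu) hFtop
      (hxF.le.trans (le_mul_of_one_le_left (norm_nonneg x) (by nlinarith)))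
  have ht : 0 < t := zero_lt_one.trans_le ht1
  rw [← hts, hFinv t ht, div_eq_mul_one_div]
  refine ofReal_mul_le_lintegral_mul Metric.isClosed_closedBall.measurableSet
    (fun y _ => phiSq_nonneg l y) (integrable_phiSq hl.ne').integrableOn (by positivity) hr.le
    fun y hy => ?_
  rw [mem_closedBall_zero_iff] at hy
  have hxy_far : M ≤ ‖x - y‖ := by linarith [norm_sub_norm_le x y]
  have hxy_near : (1 + ε) * ‖x - y‖ ≤ F t := by rw [hts]; nlinarith [norm_sub_le x y]
  have hUt : 1 / U (x - y) < t := (hFmono.lt_iff_lt (one_div_pos.2 (hUpos _)) ht).1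
    ((hM _ hxy_far).trans_le hxy_near)
  exact (one_div_le ht (hUpos _)).2 hUt.le

/-- Lower bound on the Gaussian convolution: for all sufficiently large `|x|`,
`(|φ₀|² * U)(x) ≥ (1-ε)/F⁻¹((1+ε)²|x|)`.  The (nonnegative) convolution integral is
taken in the extended sense (as a Lebesgue lower integral). -/
theorem stmt_7
    (F : ℝ → ℝ)
    (hFpos : ∀ t > 0, 0 < F t)
    (hFcont : ContinuousOn F (Set.Ioi 0))
    (hFmono : StrictMonoOn F (Set.Ioi 0))
    (hFtop : Tendsto F atTop atTop)
    (U : E2 → ℝ)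
    (hUpos : ∀ x, 0 < U x)
    (hUmeas : Measurable U)
    (hUdecay : Tendsto (fun x : E2 => F (1 / U x) / ‖x‖)
      (comap (fun x : E2 => ‖x‖) atTop) (nhds 1))
    (l : ℝ) (hl : 0 < l)
    (Finv : ℝ → ℝ)
    (hFinv : ∀ t > 0, Finv (F t) = t)
    (ε : ℝ) (hε : ε ∈ Set.Ioo (0 : ℝ) 1) :
    ∃ R > 0, ∀ x : E2, R < ‖x‖ →
      ENNReal.ofReal ((1 - ε) / Finv ((1 + ε) ^ 2 * ‖x‖)) ≤
        ∫⁻ y : E2, ENNReal.ofReal (phiSq l y * U (x - y)) :=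
  stmt_7_general F hFcont hFmono hFtop U hUpos hUdecay l hl Finv hFinv ε hε
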